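/- (Mixed norm parabolic estimate.) Let 1 ≤ a₁ < b₁ ≤ a₂ < b₂ ≤ ∞, ψ ∈ Ψ(a₁,b₁), ν ∈ Ψ(a₂,b₂), and let 1 ≤ A < B ≤ ∞ and θ ∈ Ψ(A,B). Set Φ_ψ(t) = sup_{p∈(a₁,b₁)} t^{d/(2p)}/ψ(p) and Φ_ν(t) = sup_{r∈(a₂,b₂)} t^{d/(2r)}/ν(r). Then there is a finite constant C (independent of T and f) such that for every T > 2 and every measurable f : ℝ^d → ℝ: sup_{s∈(A,B)} θ(s)^{-1} ( ∫_2^T ‖T_t f‖_{G(ν)}^s dt )^{1/s} ≤ C · ‖f‖_{G(ψ)} · sup_{s∈(A,B)} θ(s)^{-1} ( ∫_2^T (Φ_ν(t)/Φ_ψ(t))^s dt )^{1/s}, with all quantities interpreted in [0,∞]. -/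

import Mathlib

set_option maxRecDepth 2000
set_option linter.unusedVariables false


open MeasureTheory Real ENNReal

/-- The heat propagator `T_t` on `ℝ^d`. -/
noncomputable def heatProp (d : ℕ) (t : ℝ) (f : EuclideanSpace ℝ (Fin d) → ℝ) :
    EuclideanSpace ℝ (Fin d) → ℝ :=
  fun x => (2 * Real.pi * t) ^ (-(d : ℝ) / 2) *
    ∫ y : EuclideanSpace ℝ (Fin d), Real.exp (-‖x - y‖ ^ 2 / (2 * t)) * f y

/-- The interval `(a,b)` of exponents, where `b` may be `∞`. -/
def glSet (a : ℝ) (b : ℝ≥0∞) : Set ℝ := {p : ℝ | a < p ∧ ENNReal.ofReal p < b}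

/-- The Grand Lebesgue norm `‖f‖_{G(ψ)} = sup_{p ∈ S} |f|_p / ψ(p)`, in `[0,∞]`. -/
noncomputable def glNorm (d : ℕ) (S : Set ℝ) (ψ : ℝ → ℝ)
    (f : EuclideanSpace ℝ (Fin d) → ℝ) : ℝ≥0∞ :=
  ⨆ p ∈ S, eLpNorm f (ENNReal.ofReal p) volume / ENNReal.ofReal (ψ p)

/-- The fundamental-function ratio input `Φ_ψ(t) = sup_{p∈S} t^{d/(2p)}/ψ(p)`. -/
noncomputable def fundFun (d : ℕ) (S : Set ℝ) (ψ : ℝ → ℝ) (t : ℝ) : ℝ≥0∞ :=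
  ⨆ p ∈ S, ENNReal.ofReal (t ^ ((d : ℝ) / (2 * p)) / ψ p)

lemma gauss_lint (d : ℕ) {t q : ℝ} (ht : 0 < t) (hq : 0 < q) :
    ∫⁻ y : EuclideanSpace ℝ (Fin d), (ENNReal.ofReal (rexp (-‖y‖^2/(2*t))))^q
      = ENNReal.ofReal ((2*π*t/q) ^ ((d:ℝ)/2)) := by
  have hb : (0:ℝ) < q/(2*t) := by positivity
  have hint : Integrable (fun v : EuclideanSpace ℝ (Fin d) => rexp (-(q/(2*t)) * ‖v‖^2)) := by
    have h := (GaussianFourier.integrable_cexp_neg_mul_sq_norm_add (V := EuclideanSpace ℝ (Fin d))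
      (b := ((q/(2*t) : ℝ) : ℂ)) (by rw [Complex.ofReal_re]; exact hb) 0 0).norm
    simp only [Complex.norm_exp, zero_mul, add_zero, ← Complex.ofReal_pow,
      ← Complex.ofReal_mul, ← Complex.ofReal_neg, Complex.ofReal_re, neg_mul] at h
    simpa [neg_mul] using h
  have h1 : ∀ y : EuclideanSpace ℝ (Fin d),
      (ENNReal.ofReal (rexp (-‖y‖^2/(2*t))))^q = ENNReal.ofReal (rexp (-(q/(2*t)) * ‖y‖^2)) := by
    intro y
    rw [ENNReal.ofReal_rpow_of_pos (exp_pos _), Real.rpow_def_of_pos (exp_pos _), Real.log_exp]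
    congr 2
    field_simp
  simp_rw [h1]
  rw [← ofReal_integral_eq_lintegral_ofReal hint (Filter.Eventually.of_forall fun y => (exp_pos _).le)]
  rw [GaussianFourier.integral_rexp_neg_mul_sq_norm hb]
  congr 2
  · field_simp
  · simp

lemma young_conv (d : ℕ) (K F : EuclideanSpace ℝ (Fin d) → ℝ≥0∞)
    (hK : Measurable K) (hF : Measurable F) {p q r : ℝ}
    (hp : 1 < p) (hpr : p < r) (hq : 1/q = 1 + 1/r - 1/p)
    (hq0 : 0 < q)
    (hKq0 : ∫⁻ y, K y ^ q ≠ 0) (hKqt : ∫⁻ y, K y ^ q ≠ ⊤) :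
    ∫⁻ x, (∫⁻ y, K (x - y) * F y) ^ r
      ≤ (∫⁻ y, K y ^ q) ^ (r/q) * (∫⁻ y, F y ^ p) ^ (r/p) := by
  have hp0 : (0:ℝ) < p := by linarith
  have hr0 : (0:ℝ) < r := by linarith
  have hrr : r * (1/r) = 1 := mul_one_div_cancel hr0.ne'
  have hw1 : (0:ℝ) < 1/r := by positivity
  have hw2 : (0:ℝ) ≤ 1 - 1/p := by
    have : 1/p < 1 := by rw [div_lt_one hp0]; exact hp
    linarith
  have hw3 : (0:ℝ) ≤ 1/p - 1/r := by
    have := one_div_le_one_div_of_le hp0 hpr.le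
    linarith
  set Kq := ∫⁻ y, K y ^ q with hKq
  set Fp := ∫⁻ y, F y ^ p with hFp
  have hpoint : ∀ a b : ℝ≥0∞,
      (a^q * b^p)^(1/r) * ((a^q)^(1-1/p) * (b^p)^(1/p-1/r)) = a * b := by
    intro a b
    rw [ENNReal.mul_rpow_of_nonneg _ _ hw1.le, mul_mul_mul_comm,
      ← ENNReal.rpow_add_of_nonneg _ _ hw1.le hw2, ← ENNReal.rpow_add_of_nonneg _ _ hw1.le hw3,
      ← ENNReal.rpow_mul, ← ENNReal.rpow_mul]
    have e1 : q * (1/r + (1 - 1/p)) = 1 := by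
      have h' : 1/r + (1 - 1/p) = 1/q := by linarith
      rw [h']
      field_simp
    have e2 : p * (1/r + (1/p - 1/r)) = 1 := by field_simp; ring
    rw [e1, e2, ENNReal.rpow_one, ENNReal.rpow_one]
  have step1 : ∀ x, (∫⁻ y, K (x - y) * F y)
      ≤ (∫⁻ y, K (x-y)^q * F y^p) ^ (1/r) * (Kq ^ (1-1/p) * Fp ^ (1/p-1/r)) := by
    intro x
    have hKx : Measurable fun y => K (x - y) := hK.comp (measurable_const.sub measurable_id)
    have h := ENNReal.lintegral_mul_prod_norm_pow_le (μ := volume) (Finset.univ : Finset (Fin 2))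
      (g := fun y => K (x-y)^q * F y^p)
      (f := ![fun y => K (x-y)^q, fun y => F y ^ p])
      (((hKx.pow_const q).mul (hF.pow_const p)).aemeasurable)
      (fun i _ => by fin_cases i <;>
        [exact (hKx.pow_const q).aemeasurable; exact (hF.pow_const p).aemeasurable])
      (1/r) (p := ![1 - 1/p, 1/p - 1/r])
      (by simp [Fin.sum_univ_two])
      hw1.le
      (fun i _ => by fin_cases i <;> [simpa using hw2; simpa using hw3])
    have hcongr : (∫⁻ y, K (x - y) * F y) = ∫⁻ y, ((fun y => K (x-y)^q * F y^p) y) ^ (1/r)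
        * ∏ i, (![fun y => K (x-y)^q, fun y => F y ^ p] i y) ^ (![1 - 1/p, 1/p - 1/r] i) := by
      refine lintegral_congr fun y => ?_
      simp only [Fin.prod_univ_two, Matrix.cons_val_zero, Matrix.cons_val_one, Matrix.head_cons]
      exact (hpoint (K (x-y)) (F y)).symm
    rw [hcongr]
    refine h.trans ?_
    have hKtrans : ∫⁻ y, K (x - y) ^ q = Kq :=
      (Measure.measurePreserving_sub_left volume x).lintegral_comp
        (f := fun z => K z ^ q) (hK.pow_const q)
    have hfin : (∏ i, (∫⁻ y, (![fun y => K (x-y)^q, fun y => F y ^ p] i y)) ^ (![1 - 1/p, 1/p - 1/r] i))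
        = Kq ^ (1-1/p) * Fp ^ (1/p-1/r) := by
      rw [Fin.prod_univ_two]
      show (∫⁻ y, K (x-y)^q) ^ (1-1/p) * (∫⁻ y, F y ^ p) ^ (1/p-1/r) = _
      rw [hKtrans]
    rw [hfin]
  by_cases hFtop : Fp = ⊤
  · rw [hFtop, ENNReal.top_rpow_of_pos (by positivity : (0:ℝ) < r/p),
      ENNReal.mul_top (by simp [ENNReal.rpow_eq_zero_iff, hKq0, hKqt])]
    exact le_top
  · set C2 := Kq ^ ((1-1/p)*r) * Fp ^ ((1/p-1/r)*r) with hC2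
    have hC2top : C2 ≠ ⊤ := ENNReal.mul_ne_top
      (ENNReal.rpow_ne_top_of_nonneg (mul_nonneg hw2 hr0.le) hKqt)
      (ENNReal.rpow_ne_top_of_nonneg (mul_nonneg hw3 hr0.le) hFtop)
    have swapmeas : AEMeasurable (Function.uncurry fun (x y : EuclideanSpace ℝ (Fin d)) =>
        K (x - y) ^ q * F y ^ p) ((volume : Measure (EuclideanSpace ℝ (Fin d))).prod volume) := by
      exact (((hK.comp (measurable_fst.sub measurable_snd)).pow_const q).mul
        ((hF.comp measurable_snd).pow_const p)).aemeasurable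
    calc ∫⁻ x, (∫⁻ y, K (x - y) * F y) ^ r
        ≤ ∫⁻ x, (∫⁻ y, K (x-y)^q * F y^p) * C2 := by
          refine lintegral_mono fun x => ?_
          refine (ENNReal.rpow_le_rpow (step1 x) hr0.le).trans (le_of_eq ?_)
          rw [ENNReal.mul_rpow_of_nonneg _ _ hr0.le, ENNReal.mul_rpow_of_nonneg _ _ hr0.le,
            ← ENNReal.rpow_mul, ← ENNReal.rpow_mul, ← ENNReal.rpow_mul,
            one_div_mul_cancel hr0.ne', ENNReal.rpow_one, hC2]
      _ = (∫⁻ x, ∫⁻ y, K (x-y)^q * F y^p) * C2 := lintegral_mul_const' _ _ hC2top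
      _ = (Kq * Fp) * C2 := by
          congr 1
          rw [lintegral_lintegral_swap swapmeas]
          have h' : ∀ y : EuclideanSpace ℝ (Fin d),
              ∫⁻ x, K (x-y)^q * F y^p = Kq * F y ^ p := by
            intro y
            have hmx : Measurable fun x : EuclideanSpace ℝ (Fin d) => K (x - y) ^ q :=
              (hK.comp (measurable_id.sub measurable_const)).pow_const q
            rw [lintegral_mul_const _ hmx]
            congr 1
            exact (measurePreserving_sub_right volume y).lintegral_comp
              (f := fun z => K z ^ q) (hK.pow_const q)
          simp_rw [h']
          rw [lintegral_const_mul' _ _ hKqt]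
      _ = Kq ^ (r/q) * Fp ^ (r/p) := by
          have e1 : r/q = 1 + (1-1/p)*r := by
            calc r/q = r*(1/q) := by ring
              _ = r*(1 + 1/r - 1/p) := by rw [hq]
              _ = 1 + (1-1/p)*r := by linear_combination hrr
          have e2 : r/p = 1 + (1/p-1/r)*r := by linear_combination hrr
          have hKcomb : Kq * Kq ^ ((1-1/p)*r) = Kq ^ (r/q) := by
            rw [e1, ENNReal.rpow_add_of_nonneg _ _ zero_le_one (mul_nonneg hw2 hr0.le),
              ENNReal.rpow_one]
          have hFcomb : Fp * Fp ^ ((1/p-1/r)*r) = Fp ^ (r/p) := by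
            rw [e2, ENNReal.rpow_add_of_nonneg _ _ zero_le_one (mul_nonneg hw3 hr0.le),
              ENNReal.rpow_one]
          rw [hC2, mul_mul_mul_comm, hKcomb, hFcomb]

lemma heat_bound (d : ℕ) (f : EuclideanSpace ℝ (Fin d) → ℝ) (hf : Measurable f)
    {t p r : ℝ} (ht : 1 < t) (hp : 1 < p) (hpr : p < r) :
    eLpNorm (heatProp d t f) (ENNReal.ofReal r) volume
      ≤ ENNReal.ofReal (t ^ ((d:ℝ)/(2*r) - (d:ℝ)/(2*p))) * eLpNorm f (ENNReal.ofReal p) volume := by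
  have ht0 : (0:ℝ) < t := by linarith
  have hp0 : (0:ℝ) < p := by linarith
  have hr0 : (0:ℝ) < r := by linarith
  set q : ℝ := (1 + 1/r - 1/p)⁻¹ with hqdef
  have hqden : (0:ℝ) < 1 + 1/r - 1/p := by
    have h1 : 1/p < 1 := by rw [div_lt_one hp0]; exact hp
    have h2 : (0:ℝ) < 1/r := by positivity
    linarith
  have hq : 1/q = 1 + 1/r - 1/p := by rw [hqdef, one_div, inv_inv]
  have hq0 : (0:ℝ) < q := by rw [hqdef]; exact inv_pos.mpr hqden
  have hq1 : (1:ℝ) ≤ q := by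
    rw [hqdef]
    refine one_le_inv_iff₀.mpr ⟨hqden, ?_⟩
    have := one_div_le_one_div_of_le hp0 hpr.le
    linarith
  set K : EuclideanSpace ℝ (Fin d) → ℝ≥0∞ :=
    fun y => ENNReal.ofReal (rexp (-‖y‖^2/(2*t))) with hKdef
  set F : EuclideanSpace ℝ (Fin d) → ℝ≥0∞ := fun y => (‖f y‖₊ : ℝ≥0∞) with hFdef
  have hKmeas : Measurable K := by fun_prop
  have hFmeas : Measurable F := hf.nnnorm.coe_nnreal_ennreal
  have hKq : ∫⁻ y, K y ^ q = ENNReal.ofReal ((2*π*t/q) ^ ((d:ℝ)/2)) := gauss_lint d ht0 hq0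
  have hGq0 : (0:ℝ) < (2*π*t/q) ^ ((d:ℝ)/2) := by positivity
  have hKq0 : ∫⁻ y, K y ^ q ≠ 0 := by
    rw [hKq]; simp [ENNReal.ofReal_eq_zero, not_le, hGq0]
  have hKqt : ∫⁻ y, K y ^ q ≠ ⊤ := by rw [hKq]; exact ENNReal.ofReal_ne_top
  have hc0 : (0:ℝ) < (2 * π * t) ^ (-(d:ℝ)/2) := by positivity
  -- pointwise bound
  have hpt : ∀ x, (‖heatProp d t f x‖₊ : ℝ≥0∞)
      ≤ ENNReal.ofReal ((2 * π * t) ^ (-(d:ℝ)/2)) * ∫⁻ y, K (x - y) * F y := by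
    intro x
    show (‖(2 * π * t) ^ (-(d:ℝ)/2) * ∫ y, rexp (-‖x - y‖^2/(2*t)) * f y‖₊ : ℝ≥0∞) ≤ _
    rw [nnnorm_mul, ENNReal.coe_mul, ← enorm_eq_nnnorm ((2 * π * t) ^ (-(d:ℝ)/2)), Real.enorm_eq_ofReal hc0.le]
    refine mul_le_mul_right ?_ _
    refine (enorm_integral_le_lintegral_enorm _).trans (le_of_eq ?_)
    refine lintegral_congr fun y => ?_
    rw [enorm_eq_nnnorm, nnnorm_mul, ENNReal.coe_mul, ← enorm_eq_nnnorm (rexp _), Real.enorm_eq_ofReal (exp_pos _).le]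
  have h0r : ENNReal.ofReal r ≠ 0 := by simp [hr0]
  have h0p : ENNReal.ofReal p ≠ 0 := by simp [hp0]
  have key := young_conv d K F hKmeas hFmeas hp hpr hq hq0 hKq0 hKqt
  calc eLpNorm (heatProp d t f) (ENNReal.ofReal r) volume
      = (∫⁻ x, (‖heatProp d t f x‖₊ : ℝ≥0∞) ^ r) ^ (1/r) := by
        rw [eLpNorm_eq_lintegral_rpow_enorm_toReal h0r ENNReal.ofReal_ne_top,
          ENNReal.toReal_ofReal hr0.le]
        rfl
    _ ≤ ((ENNReal.ofReal ((2 * π * t) ^ (-(d:ℝ)/2))) ^ r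
          * ((∫⁻ y, K y ^ q) ^ (r/q) * (∫⁻ y, F y ^ p) ^ (r/p))) ^ (1/r) := by
        refine ENNReal.rpow_le_rpow ?_ (by positivity)
        calc ∫⁻ x, (‖heatProp d t f x‖₊ : ℝ≥0∞) ^ r
            ≤ ∫⁻ x, (ENNReal.ofReal ((2 * π * t) ^ (-(d:ℝ)/2)) * ∫⁻ y, K (x - y) * F y) ^ r :=
              lintegral_mono fun x => ENNReal.rpow_le_rpow (hpt x) hr0.le
          _ = (ENNReal.ofReal ((2 * π * t) ^ (-(d:ℝ)/2))) ^ r * ∫⁻ x, (∫⁻ y, K (x - y) * F y) ^ r := by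
              simp_rw [ENNReal.mul_rpow_of_nonneg _ _ hr0.le]
              exact lintegral_const_mul' _ _
                (ENNReal.rpow_ne_top_of_nonneg hr0.le ENNReal.ofReal_ne_top)
          _ ≤ _ := mul_le_mul_right key _
    _ = ENNReal.ofReal ((2 * π * t) ^ (-(d:ℝ)/2)) * ((∫⁻ y, K y ^ q) ^ (1/q) * (∫⁻ y, F y ^ p) ^ (1/p)) := by
        rw [ENNReal.mul_rpow_of_nonneg _ _ (by positivity : (0:ℝ) ≤ 1/r),
          ENNReal.mul_rpow_of_nonneg _ _ (by positivity : (0:ℝ) ≤ 1/r),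
          ← ENNReal.rpow_mul, ← ENNReal.rpow_mul, ← ENNReal.rpow_mul,
          mul_one_div_cancel hr0.ne', ENNReal.rpow_one,
          show r/q * (1/r) = 1/q by field_simp,
          show r/p * (1/r) = 1/p by field_simp]
    _ ≤ _ := by
        have hFint : (∫⁻ y, F y ^ p) ^ (1/p) = eLpNorm f (ENNReal.ofReal p) volume := by
          rw [eLpNorm_eq_lintegral_rpow_enorm_toReal h0p ENNReal.ofReal_ne_top,
            ENNReal.toReal_ofReal hp0.le]
          rfl
        rw [hKq, ENNReal.ofReal_rpow_of_pos hGq0, ← mul_assoc, ← ENNReal.ofReal_mul hc0.le, hFint]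
        refine mul_le_mul_left (ENNReal.ofReal_le_ofReal ?_) _
        -- real inequality
        set X : ℝ := 2 * π * t with hXdef
        have htX : t ≤ X := by nlinarith [pi_gt_three]
        have hX0 : (0:ℝ) < X := by positivity
        have e1 : ((2*π*t/q) ^ ((d:ℝ)/2)) ^ (1/q) = (X/q) ^ ((d:ℝ)/2 * (1/q)) :=
          (Real.rpow_mul (by positivity) _ _).symm
        rw [e1]
        have e2 : (X/q) ^ ((d:ℝ)/2 * (1/q)) ≤ X ^ ((d:ℝ)/2 * (1/q)) :=
          Real.rpow_le_rpow (by positivity) (div_le_self hX0.le hq1) (by positivity)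
        calc X ^ (-(d:ℝ)/2) * (X/q) ^ ((d:ℝ)/2 * (1/q))
            ≤ X ^ (-(d:ℝ)/2) * X ^ ((d:ℝ)/2 * (1/q)) := by
              exact mul_le_mul_of_nonneg_left e2 (by positivity)
          _ = X ^ (-(d:ℝ)/2 + (d:ℝ)/2 * (1/q)) := (Real.rpow_add hX0 _ _).symm
          _ ≤ t ^ (-(d:ℝ)/2 + (d:ℝ)/2 * (1/q)) := by
              refine Real.rpow_le_rpow_of_nonpos ht0 htX ?_
              rw [hq]
              have h3 : (d:ℝ)/(2*r) ≤ (d:ℝ)/(2*p) := by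
                apply div_le_div_of_nonneg_left (by positivity) (by positivity)
                linarith
              have : -(d:ℝ)/2 + (d:ℝ)/2 * (1 + 1/r - 1/p) = (d:ℝ)/(2*r) - (d:ℝ)/(2*p) := by ring
              linarith [this, h3]
          _ = t ^ ((d:ℝ)/(2*r) - (d:ℝ)/(2*p)) := by
              congr 1
              rw [hq]
              ring

lemma glSet_nonempty {a : ℝ} {b : ℝ≥0∞} (ha : 1 ≤ a) (h : ENNReal.ofReal a < b) :
    ∃ s, s ∈ glSet a b := by
  rcases ENNReal.lt_iff_exists_real_btwn.mp h with ⟨x, hx0, hax, hxb⟩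
  have hx : a < x := by
    rwa [ENNReal.ofReal_lt_ofReal_iff_of_nonneg (by linarith)] at hax
  exact ⟨x, hx, hxb⟩


/-- Mixed norm parabolic estimate: the `G(θ)` norm in the time variable of
`‖T_t f‖_{G(ν)}`, `t ∈ (2,T)`, is bounded by `C ‖f‖_{G(ψ)}` times the `G(θ)` norm
of the ratio `Φ_ν(t)/Φ_ψ(t)` of fundamental functions, uniformly in `T > 2`. -/
theorem mixed_norm_parabolic (d : ℕ) (hd : 1 ≤ d)
    (a₁ b₁ a₂ : ℝ) (b₂ : ℝ≥0∞)
    (h1 : 1 ≤ a₁) (h2 : a₁ < b₁) (h3 : b₁ ≤ a₂) (h4 : ENNReal.ofReal a₂ < b₂)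
    (A : ℝ) (B : ℝ≥0∞) (hA : 1 ≤ A) (hAB : ENNReal.ofReal A < B)
    (ψ ν θ : ℝ → ℝ)
    (hψ_cont : ContinuousOn ψ (Set.Ioo a₁ b₁))
    (hψ_pos : ∀ p ∈ Set.Ioo a₁ b₁, 0 < ψ p)
    (hψ_inf : ∃ ε : ℝ, 0 < ε ∧ ∀ p ∈ Set.Ioo a₁ b₁, ε ≤ ψ p)
    (hν_cont : ContinuousOn ν (glSet a₂ b₂))
    (hν_pos : ∀ r ∈ glSet a₂ b₂, 0 < ν r)
    (hν_inf : ∃ ε : ℝ, 0 < ε ∧ ∀ r ∈ glSet a₂ b₂, ε ≤ ν r)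
    (hθ_cont : ContinuousOn θ (glSet A B))
    (hθ_pos : ∀ s ∈ glSet A B, 0 < θ s)
    (hθ_inf : ∃ ε : ℝ, 0 < ε ∧ ∀ s ∈ glSet A B, ε ≤ θ s) :
    ∃ C : ℝ, 0 < C ∧ ∀ T : ℝ, 2 < T → ∀ f : EuclideanSpace ℝ (Fin d) → ℝ,
      Measurable f →
      (⨆ s ∈ glSet A B,
          (∫⁻ t in Set.Ioo (2 : ℝ) T,
              glNorm d (glSet a₂ b₂) ν (heatProp d t f) ^ s) ^ (1 / s)
            / ENNReal.ofReal (θ s))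
        ≤ ENNReal.ofReal C * glNorm d (Set.Ioo a₁ b₁) ψ f
            * ⨆ s ∈ glSet A B,
                (∫⁻ t in Set.Ioo (2 : ℝ) T,
                    (fundFun d (glSet a₂ b₂) ν t / fundFun d (Set.Ioo a₁ b₁) ψ t) ^ s)
                  ^ (1 / s) / ENNReal.ofReal (θ s) := by
  obtain ⟨εψ, hεψ, hψε⟩ := hψ_inf
  refine ⟨2, two_pos, ?_⟩
  intro T hT f hf
  have hp₀mem : (a₁+b₁)/2 ∈ Set.Ioo a₁ b₁ := ⟨by linarith, by linarith⟩
  -- the key pointwise (in t) estimate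
  have key : ∀ t ∈ Set.Ioo (2:ℝ) T, glNorm d (glSet a₂ b₂) ν (heatProp d t f)
      ≤ 2 * glNorm d (Set.Ioo a₁ b₁) ψ f
        * (fundFun d (glSet a₂ b₂) ν t / fundFun d (Set.Ioo a₁ b₁) ψ t) := by
    rintro t ⟨ht2, htT⟩
    have ht1 : (1:ℝ) < t := by linarith
    have ht0 : (0:ℝ) < t := by linarith
    have hne : fundFun d (Set.Ioo a₁ b₁) ψ t ≠ 0 := by
      have hpos : 0 < ENNReal.ofReal (t ^ ((d:ℝ)/(2*((a₁+b₁)/2))) / ψ ((a₁+b₁)/2)) :=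
        ENNReal.ofReal_pos.mpr (div_pos (Real.rpow_pos_of_pos ht0 _) (hψ_pos _ hp₀mem))
      have hle : ENNReal.ofReal (t ^ ((d:ℝ)/(2*((a₁+b₁)/2))) / ψ ((a₁+b₁)/2))
          ≤ fundFun d (Set.Ioo a₁ b₁) ψ t :=
        le_iSup₂ (f := fun p (_ : p ∈ Set.Ioo a₁ b₁) =>
          ENNReal.ofReal (t ^ ((d:ℝ)/(2*p)) / ψ p)) ((a₁+b₁)/2) hp₀mem
      exact (hpos.trans_le hle).ne'
    have htop : fundFun d (Set.Ioo a₁ b₁) ψ t ≠ ⊤ := by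
      have hbound : fundFun d (Set.Ioo a₁ b₁) ψ t ≤ ENNReal.ofReal (t ^ ((d:ℝ)/2) / εψ) := by
        refine iSup₂_le fun p hp => ENNReal.ofReal_le_ofReal ?_
        have hp1 : 1 ≤ p := h1.trans hp.1.le
        have hexp : t ^ ((d:ℝ)/(2*p)) ≤ t ^ ((d:ℝ)/2) := by
          apply Real.rpow_le_rpow_of_exponent_le ht1.le
          apply div_le_div_of_nonneg_left (Nat.cast_nonneg d) two_pos
          linarith
        exact div_le_div₀ (by positivity) hexp hεψ (hψε p hp)
      exact ne_top_of_le_ne_top ENNReal.ofReal_ne_top hbound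
    obtain ⟨p, hpmem, hplt⟩ : ∃ p ∈ Set.Ioo a₁ b₁,
        fundFun d (Set.Ioo a₁ b₁) ψ t / 2 < ENNReal.ofReal (t ^ ((d:ℝ)/(2*p)) / ψ p) := by
      have hhalf : fundFun d (Set.Ioo a₁ b₁) ψ t / 2 < fundFun d (Set.Ioo a₁ b₁) ψ t :=
        ENNReal.half_lt_self hne htop
      have h2' : fundFun d (Set.Ioo a₁ b₁) ψ t / 2
          < ⨆ p ∈ Set.Ioo a₁ b₁, ENNReal.ofReal (t ^ ((d:ℝ)/(2*p)) / ψ p) := hhalf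
      rw [lt_iSup_iff] at h2'
      obtain ⟨p, hp2⟩ := h2'
      rw [lt_iSup_iff] at hp2
      obtain ⟨hpmem, hlt⟩ := hp2
      exact ⟨p, hpmem, hlt⟩
    have hp1 : 1 < p := h1.trans_lt hpmem.1
    have hψp := hψ_pos p hpmem
    show (⨆ r ∈ glSet a₂ b₂, eLpNorm (heatProp d t f) (ENNReal.ofReal r) volume
        / ENNReal.ofReal (ν r)) ≤ _
    refine iSup₂_le fun r hr => ?_
    have hpr : p < r := hpmem.2.trans (h3.trans_lt hr.1)
    have hνr := hν_pos r hr
    have hfp : eLpNorm f (ENNReal.ofReal p) volume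
        ≤ glNorm d (Set.Ioo a₁ b₁) ψ f * ENNReal.ofReal (ψ p) := by
      have hle : eLpNorm f (ENNReal.ofReal p) volume / ENNReal.ofReal (ψ p)
          ≤ glNorm d (Set.Ioo a₁ b₁) ψ f :=
        le_iSup₂ (f := fun p (_ : p ∈ Set.Ioo a₁ b₁) =>
          eLpNorm f (ENNReal.ofReal p) volume / ENNReal.ofReal (ψ p)) p hpmem
      exact (ENNReal.div_le_iff (by simp [hψp]) ENNReal.ofReal_ne_top).mp hle
    have hinv : ENNReal.ofReal (t ^ (-((d:ℝ)/(2*p)))) * ENNReal.ofReal (ψ p)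
        ≤ 2 / fundFun d (Set.Ioo a₁ b₁) ψ t := by
      have hu : ENNReal.ofReal (t ^ (-((d:ℝ)/(2*p)))) * ENNReal.ofReal (ψ p)
          = (ENNReal.ofReal (t ^ ((d:ℝ)/(2*p)) / ψ p))⁻¹ := by
        rw [← ENNReal.ofReal_mul (Real.rpow_nonneg ht0.le _),
          ← ENNReal.ofReal_inv_of_pos (div_pos (Real.rpow_pos_of_pos ht0 _) hψp)]
        congr 1
        rw [Real.rpow_neg ht0.le, inv_div]
        ring
      rw [hu]
      refine (ENNReal.inv_le_inv.mpr hplt.le).trans (le_of_eq ?_)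
      rw [ENNReal.inv_div (Or.inl (by simp)) (Or.inl (by simp))]
    calc eLpNorm (heatProp d t f) (ENNReal.ofReal r) volume / ENNReal.ofReal (ν r)
        ≤ (ENNReal.ofReal (t ^ ((d:ℝ)/(2*r))) * (ENNReal.ofReal (t ^ (-((d:ℝ)/(2*p))))
            * eLpNorm f (ENNReal.ofReal p) volume)) / ENNReal.ofReal (ν r) := by
          refine ENNReal.div_le_div ?_ le_rfl
          refine (heat_bound d f hf ht1 hp1 hpr).trans (le_of_eq ?_)
          rw [← mul_assoc, ← ENNReal.ofReal_mul (Real.rpow_nonneg ht0.le _),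
            ← Real.rpow_add ht0,
            show (d:ℝ)/(2*r) + -((d:ℝ)/(2*p)) = (d:ℝ)/(2*r) - (d:ℝ)/(2*p) from by ring]
      _ = (ENNReal.ofReal (t ^ ((d:ℝ)/(2*r))) / ENNReal.ofReal (ν r))
            * (ENNReal.ofReal (t ^ (-((d:ℝ)/(2*p)))) * eLpNorm f (ENNReal.ofReal p) volume) := by
          simp only [div_eq_mul_inv]
          ring
      _ ≤ fundFun d (glSet a₂ b₂) ν t
            * (ENNReal.ofReal (t ^ (-((d:ℝ)/(2*p)))) * eLpNorm f (ENNReal.ofReal p) volume) := by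
          refine mul_le_mul_left ?_ _
          rw [← ENNReal.ofReal_div_of_pos hνr]
          exact le_iSup₂ (f := fun r (_ : r ∈ glSet a₂ b₂) =>
            ENNReal.ofReal (t ^ ((d:ℝ)/(2*r)) / ν r)) r hr
      _ ≤ fundFun d (glSet a₂ b₂) ν t
            * ((2 / fundFun d (Set.Ioo a₁ b₁) ψ t) * glNorm d (Set.Ioo a₁ b₁) ψ f) := by
          refine mul_le_mul_right ?_ _
          calc ENNReal.ofReal (t ^ (-((d:ℝ)/(2*p)))) * eLpNorm f (ENNReal.ofReal p) volume
              ≤ ENNReal.ofReal (t ^ (-((d:ℝ)/(2*p))))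
                  * (glNorm d (Set.Ioo a₁ b₁) ψ f * ENNReal.ofReal (ψ p)) :=
                mul_le_mul_right hfp _
            _ = (ENNReal.ofReal (t ^ (-((d:ℝ)/(2*p)))) * ENNReal.ofReal (ψ p))
                  * glNorm d (Set.Ioo a₁ b₁) ψ f := by ring
            _ ≤ (2 / fundFun d (Set.Ioo a₁ b₁) ψ t) * glNorm d (Set.Ioo a₁ b₁) ψ f :=
                mul_le_mul_left hinv _
      _ = 2 * glNorm d (Set.Ioo a₁ b₁) ψ f
            * (fundFun d (glSet a₂ b₂) ν t / fundFun d (Set.Ioo a₁ b₁) ψ t) := by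
          simp only [div_eq_mul_inv]
          ring
  by_cases hGtop : glNorm d (Set.Ioo a₁ b₁) ψ f = ⊤
  · -- right-hand side is infinite
    have hS0 : (⨆ s ∈ glSet A B, (∫⁻ t in Set.Ioo (2:ℝ) T,
        (fundFun d (glSet a₂ b₂) ν t / fundFun d (Set.Ioo a₁ b₁) ψ t) ^ s) ^ (1/s)
        / ENNReal.ofReal (θ s)) ≠ 0 := by
      obtain ⟨s₀, hs₀⟩ := glSet_nonempty hA hAB
      obtain ⟨r₀, hr₀⟩ := glSet_nonempty (h1.trans (h2.le.trans h3)) h4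
      have hs₀0 : (0:ℝ) < s₀ := by have := hs₀.1; linarith
      set c : ℝ≥0∞ := ENNReal.ofReal ((1:ℝ)/ν r₀) / ENNReal.ofReal (T ^ ((d:ℝ)/2) / εψ)
        with hcdef
      have hc : ∀ t ∈ Set.Ioo (2:ℝ) T,
          c ≤ fundFun d (glSet a₂ b₂) ν t / fundFun d (Set.Ioo a₁ b₁) ψ t := by
        rintro t ⟨ht2, htT⟩
        have ht1 : (1:ℝ) < t := by linarith
        refine ENNReal.div_le_div ?_ ?_
        · refine le_trans (ENNReal.ofReal_le_ofReal ?_) (le_iSup₂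
            (f := fun r (_ : r ∈ glSet a₂ b₂) =>
              ENNReal.ofReal (t ^ ((d:ℝ)/(2*r)) / ν r)) r₀ hr₀)
          have hr₀1 : (1:ℝ) < r₀ := ((h1.trans (h2.le.trans h3))).trans_lt hr₀.1
          have h1le : (1:ℝ) ≤ t ^ ((d:ℝ)/(2*r₀)) := by
            calc (1:ℝ) = t ^ (0:ℝ) := (Real.rpow_zero t).symm
              _ ≤ _ := Real.rpow_le_rpow_of_exponent_le ht1.le
                (div_nonneg (Nat.cast_nonneg d) (by linarith))
          exact div_le_div₀ (Real.rpow_nonneg (by linarith) _) h1le (hν_pos r₀ hr₀) le_rfl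
        · refine iSup₂_le fun p hp => ENNReal.ofReal_le_ofReal ?_
          have hp1 : 1 ≤ p := h1.trans hp.1.le
          have hexp : t ^ ((d:ℝ)/(2*p)) ≤ T ^ ((d:ℝ)/2) := by
            calc t ^ ((d:ℝ)/(2*p)) ≤ t ^ ((d:ℝ)/2) := by
                  apply Real.rpow_le_rpow_of_exponent_le ht1.le
                  apply div_le_div_of_nonneg_left (Nat.cast_nonneg d) two_pos
                  linarith
              _ ≤ T ^ ((d:ℝ)/2) := Real.rpow_le_rpow (by linarith) htT.le (by positivity)
          exact div_le_div₀ (Real.rpow_nonneg (by linarith) _) hexp hεψ (hψε p hp)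
      have hc0 : c ≠ 0 := by
        rw [hcdef]
        refine (ENNReal.div_pos ?_ ENNReal.ofReal_ne_top).ne'
        simp only [Ne, ENNReal.ofReal_eq_zero, not_le]
        exact div_pos one_pos (hν_pos r₀ hr₀)
      have hint : c ^ s₀ * volume (Set.Ioo (2:ℝ) T)
          ≤ ∫⁻ t in Set.Ioo (2:ℝ) T,
            (fundFun d (glSet a₂ b₂) ν t / fundFun d (Set.Ioo a₁ b₁) ψ t) ^ s₀ := by
        rw [← setLIntegral_const, ← lintegral_indicator measurableSet_Ioo,
          ← lintegral_indicator measurableSet_Ioo]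
        refine lintegral_mono fun t => ?_
        by_cases htm : t ∈ Set.Ioo (2:ℝ) T
        · simp only [Set.indicator_of_mem htm]
          exact ENNReal.rpow_le_rpow (hc t htm) hs₀0.le
        · simp [Set.indicator_of_notMem htm]
      have hip : (∫⁻ t in Set.Ioo (2:ℝ) T,
          (fundFun d (glSet a₂ b₂) ν t / fundFun d (Set.Ioo a₁ b₁) ψ t) ^ s₀) ≠ 0 := by
        intro h0
        rw [h0, le_zero_iff, mul_eq_zero] at hint
        rcases hint with h | h
        · exact (ENNReal.rpow_eq_zero_iff.mp h).elim
            (fun hh => hc0 hh.1)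
            (fun hh => absurd hh.2 (not_lt.mpr hs₀0.le))
        · rw [Real.volume_Ioo] at h
          exact (ENNReal.ofReal_eq_zero.mp h).not_gt (by linarith)
      have hnum : ((∫⁻ t in Set.Ioo (2:ℝ) T,
          (fundFun d (glSet a₂ b₂) ν t / fundFun d (Set.Ioo a₁ b₁) ψ t) ^ s₀) ^ (1/s₀)) ≠ 0 := by
        rw [Ne, ENNReal.rpow_eq_zero_iff]
        rintro (⟨hh, _⟩ | ⟨_, hh⟩)
        · exact hip hh
        · have : (0:ℝ) < 1/s₀ := by positivity
          linarith
      refine ne_of_gt (lt_of_lt_of_le ?_ (le_iSup₂ (f := fun s (_ : s ∈ glSet A B) =>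
        (∫⁻ t in Set.Ioo (2:ℝ) T,
          (fundFun d (glSet a₂ b₂) ν t / fundFun d (Set.Ioo a₁ b₁) ψ t) ^ s) ^ (1/s)
          / ENNReal.ofReal (θ s)) s₀ hs₀))
      exact ENNReal.div_pos hnum ENNReal.ofReal_ne_top
    rw [hGtop, ENNReal.mul_top (by simp : ENNReal.ofReal (2:ℝ) ≠ 0), ENNReal.top_mul hS0]
    exact le_top
  · -- main case : finite Grand Lebesgue norm
    refine iSup₂_le fun s hs => ?_
    have hs0 : (0:ℝ) < s := by have := hs.1; linarith
    have h2G : (2 * glNorm d (Set.Ioo a₁ b₁) ψ f) ≠ ⊤ :=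
      ENNReal.mul_ne_top (by simp) hGtop
    have hmono : ∫⁻ t in Set.Ioo (2:ℝ) T, glNorm d (glSet a₂ b₂) ν (heatProp d t f) ^ s
        ≤ ∫⁻ t in Set.Ioo (2:ℝ) T, (2 * glNorm d (Set.Ioo a₁ b₁) ψ f
            * (fundFun d (glSet a₂ b₂) ν t / fundFun d (Set.Ioo a₁ b₁) ψ t)) ^ s := by
      rw [← lintegral_indicator measurableSet_Ioo, ← lintegral_indicator measurableSet_Ioo]
      refine lintegral_mono fun t => ?_
      by_cases htm : t ∈ Set.Ioo (2:ℝ) T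
      · simp only [Set.indicator_of_mem htm]
        exact ENNReal.rpow_le_rpow (key t htm) hs0.le
      · simp [Set.indicator_of_notMem htm]
    have hsplit : ∫⁻ t in Set.Ioo (2:ℝ) T, (2 * glNorm d (Set.Ioo a₁ b₁) ψ f
          * (fundFun d (glSet a₂ b₂) ν t / fundFun d (Set.Ioo a₁ b₁) ψ t)) ^ s
        = (2 * glNorm d (Set.Ioo a₁ b₁) ψ f) ^ s * ∫⁻ t in Set.Ioo (2:ℝ) T,
            (fundFun d (glSet a₂ b₂) ν t / fundFun d (Set.Ioo a₁ b₁) ψ t) ^ s := by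
      have hpt : ∀ t : ℝ, (2 * glNorm d (Set.Ioo a₁ b₁) ψ f
          * (fundFun d (glSet a₂ b₂) ν t / fundFun d (Set.Ioo a₁ b₁) ψ t)) ^ s
          = (2 * glNorm d (Set.Ioo a₁ b₁) ψ f) ^ s
            * (fundFun d (glSet a₂ b₂) ν t / fundFun d (Set.Ioo a₁ b₁) ψ t) ^ s :=
        fun t => ENNReal.mul_rpow_of_nonneg _ _ hs0.le
      simp_rw [hpt]
      exact lintegral_const_mul' _ _ (ENNReal.rpow_ne_top_of_nonneg hs0.le h2G)
    calc (∫⁻ t in Set.Ioo (2:ℝ) T, glNorm d (glSet a₂ b₂) ν (heatProp d t f) ^ s) ^ (1/s)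
          / ENNReal.ofReal (θ s)
        ≤ ((2 * glNorm d (Set.Ioo a₁ b₁) ψ f) ^ s * ∫⁻ t in Set.Ioo (2:ℝ) T,
            (fundFun d (glSet a₂ b₂) ν t / fundFun d (Set.Ioo a₁ b₁) ψ t) ^ s) ^ (1/s)
            / ENNReal.ofReal (θ s) :=
          ENNReal.div_le_div (ENNReal.rpow_le_rpow (hmono.trans_eq hsplit) (by positivity)) le_rfl
      _ = (2 * glNorm d (Set.Ioo a₁ b₁) ψ f) * ((∫⁻ t in Set.Ioo (2:ℝ) T,
            (fundFun d (glSet a₂ b₂) ν t / fundFun d (Set.Ioo a₁ b₁) ψ t) ^ s) ^ (1/s)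
            / ENNReal.ofReal (θ s)) := by
          rw [ENNReal.mul_rpow_of_nonneg _ _ (by positivity : (0:ℝ) ≤ 1/s),
            ← ENNReal.rpow_mul, mul_one_div_cancel hs0.ne', ENNReal.rpow_one]
          simp only [div_eq_mul_inv]
          ring
      _ ≤ (2 * glNorm d (Set.Ioo a₁ b₁) ψ f) * ⨆ s ∈ glSet A B,
            ((∫⁻ t in Set.Ioo (2:ℝ) T,
              (fundFun d (glSet a₂ b₂) ν t / fundFun d (Set.Ioo a₁ b₁) ψ t) ^ s) ^ (1/s)
              / ENNReal.ofReal (θ s)) :=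
          mul_le_mul_right (le_iSup₂ (f := fun s (_ : s ∈ glSet A B) =>
            (∫⁻ t in Set.Ioo (2:ℝ) T,
              (fundFun d (glSet a₂ b₂) ν t / fundFun d (Set.Ioo a₁ b₁) ψ t) ^ s) ^ (1/s)
              / ENNReal.ofReal (θ s)) s hs) _
      _ = ENNReal.ofReal 2 * glNorm d (Set.Ioo a₁ b₁) ψ f * ⨆ s ∈ glSet A B,
            ((∫⁻ t in Set.Ioo (2:ℝ) T,
              (fundFun d (glSet a₂ b₂) ν t / fundFun d (Set.Ioo a₁ b₁) ψ t) ^ s) ^ (1/s)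
              / ENNReal.ofReal (θ s)) := by
          rw [ENNReal.ofReal_ofNat]
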